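/- arXiv:1510.06630 — 2 statements merged into one kernel-verified Lean document; each statement's English description precedes it below -/
import Mathlib

section
/- Let (X, ρ, μ) be a compact metric measure space where μ is an Ahlfors t-regular Borel probability measure, let (r_n) be a decreasing sequence of positive reals tending to zero with ∑_{n=1}^∞ r_n^t = ∞, and let x_n be i.i.d. random points distributed according to μ. Then almost surely μ(limsup_{n→∞} B(x_n, r_n)) = 1. -/
open MeasureTheory ProbabilityTheory Filter Metric Set
open scoped ENNReal

/-!
Fix a point `y`. Ahlfors regularity gives `μ (B(y, rₙ)) ≥ C⁻¹ rₙ ^ t` once `rₙ < diam X`, so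
`∑ P(xₙ ∈ B(y, rₙ)) = ∞` and, by the second Borel–Cantelli lemma, almost surely `y` lies in
infinitely many of the balls `B(xₙ, rₙ)`. Fubini's theorem on `Ω × X` exchanges "for every `y`,
almost surely" into "almost surely, for `μ`-almost every `y`".
-/

theorem ENNReal.tsum_eq_top_of_eventually_ofReal_le {a : ℕ → ℝ} {g : ℕ → ℝ≥0∞}
    (ha₀ : ∀ n, 0 ≤ a n) (ha : ¬ Summable a) (hle : ∀ᶠ n in atTop, ENNReal.ofReal (a n) ≤ g n) :
    ∑' n, g n = ∞ := by
  by_contra hg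
  refine ha (Summable.of_norm_bounded_eventually_nat (ENNReal.summable_toReal hg) ?_)
  filter_upwards [hle] with n hn
  rw [Real.norm_of_nonneg (ha₀ n), ← ENNReal.toReal_ofReal (ha₀ n)]
  exact ENNReal.toReal_mono (ENNReal.ne_top_of_tsum_ne_top hg n) hn

section Balls

variable {X : Type*} [MetricSpace X] [MeasurableSpace X] {μ : Measure X} {r : ℕ → ℝ}

theorem tsum_measure_closedBall_eq_top_of_lower_bound {y : X} {c δ t : ℝ} (hc : 0 < c)
    (hδ : 0 < δ) (hlow : ∀ ρ, 0 < ρ → ρ < δ → ENNReal.ofReal (c * ρ ^ t) ≤ μ (closedBall y ρ))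
    (hrpos : ∀ n, 0 < r n) (hrlim : Tendsto r atTop (nhds 0))
    (hsum : ¬ Summable fun n => r n ^ t) :
    ∑' n, μ (closedBall y (r n)) = ∞ := by
  refine ENNReal.tsum_eq_top_of_eventually_ofReal_le (a := fun n => c * r n ^ t)
    (fun n => by have := hrpos n; positivity) (by rwa [summable_mul_left_iff hc.ne']) ?_
  filter_upwards [hrlim.eventually_lt_const hδ] with n hn
  exact hlow _ (hrpos n) hn

theorem tsum_measure_closedBall_eq_top [CompactSpace X] [IsProbabilityMeasure μ] {C t : ℝ}
    (hC : 0 < C) (hlow : ∀ (x : X) (ρ : ℝ), 0 < ρ → ρ < diam (univ : Set X) →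
      ENNReal.ofReal (C⁻¹ * ρ ^ t) ≤ μ (closedBall x ρ))
    (hrpos : ∀ n, 0 < r n) (hrlim : Tendsto r atTop (nhds 0))
    (hsum : ¬ Summable fun n => r n ^ t) (y : X) :
    ∑' n, μ (closedBall y (r n)) = ∞ := by
  rcases subsingleton_or_nontrivial X with hX | hX
  · have hball : ∀ n, closedBall y (r n) = univ := fun n =>
      eq_univ_of_forall fun z => by simp [Subsingleton.elim z y, (hrpos n).le]
    simp only [hball, measure_univ]
    exact ENNReal.tsum_const_eq_top_of_ne_zero one_ne_zero
  · exact tsum_measure_closedBall_eq_top_of_lower_bound (inv_pos.2 hC)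
      (diam_pos nontrivial_univ isCompact_univ.isBounded) (hlow y) hrpos hrlim hsum

end Balls

section RandomPoints

variable {X Ω : Type*} [MeasurableSpace X] [MeasurableSpace Ω] {P : Measure Ω}
  {x : ℕ → Ω → X}

theorem ProbabilityTheory.iIndepFun.iIndepSet_preimage
    (hindep : iIndepFun (m := fun _ => ‹MeasurableSpace X›) x P) (hmeas : ∀ n, Measurable (x n))
    {B : ℕ → Set X} (hB : ∀ n, MeasurableSet (B n)) :
    iIndepSet (fun n => x n ⁻¹' B n) P :=
  hindep.iIndep.iIndepSets'.iIndepSet_of_mem (fun n => comap_measurable (x n) (hB n))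
    (fun n => hmeas n (hB n))

theorem ProbabilityTheory.iIndepFun.ae_frequently_mem_of_tsum_eq_top [IsProbabilityMeasure P]
    (hindep : iIndepFun (m := fun _ => ‹MeasurableSpace X›) x P) (hmeas : ∀ n, Measurable (x n))
    {B : ℕ → Set X} (hB : ∀ n, MeasurableSet (B n)) (hsum : ∑' n, P (x n ⁻¹' B n) = ∞) :
    ∀ᵐ ω ∂P, ∃ᶠ n in atTop, x n ω ∈ B n := by
  have hpre : ∀ n, MeasurableSet (x n ⁻¹' B n) := fun n => hmeas n (hB n)
  have hlimsup := measure_limsup_eq_one hpre (hindep.iIndepSet_preimage hmeas hB) hsum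
  filter_upwards [(mem_ae_iff_prob_eq_one (MeasurableSet.measurableSet_limsup hpre)).2 hlimsup]
    with ω hω
  simpa [mem_limsup_iff_frequently_mem] using hω

theorem ae_measure_eq_one_of_forall_ae_mem [SFinite P] {μ : Measure X} [IsProbabilityMeasure μ]
    {E : Ω → Set X} (hE : MeasurableSet {p : Ω × X | p.2 ∈ E p.1})
    (h : ∀ y, ∀ᵐ ω ∂P, y ∈ E ω) :
    ∀ᵐ ω ∂P, μ (E ω) = 1 := by
  filter_upwards [(Measure.ae_ae_comm (p := fun ω y => y ∈ E ω) hE).2 (ae_of_all μ h)]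
    with ω hω
  exact (mem_ae_iff_prob_eq_one (measurable_prodMk_left hE)).1 hω

theorem measurableSet_setOf_mem_limsup_closedBall [MetricSpace X] [BorelSpace X]
    [SecondCountableTopology X] (hmeas : ∀ n, Measurable (x n)) (r : ℕ → ℝ) :
    MeasurableSet
      {p : Ω × X | p.2 ∈ ⋂ k : ℕ, ⋃ n : ℕ, ⋃ _ : k ≤ n, closedBall (x n p.1) (r n)} := by
  simp only [mem_iInter, mem_iUnion, ofPred_forall, ofPred_exists, mem_closedBall]
  exact .iInter fun k => .iUnion fun n => .iUnion fun _ =>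
    measurableSet_le (measurable_snd.dist ((hmeas n).comp measurable_fst)) measurable_const

end RandomPoints

theorem covering_set_full_of_not_summable_general
    {X : Type*} [MetricSpace X] [CompactSpace X] [MeasurableSpace X] [BorelSpace X]
    (μ : Measure X) [IsProbabilityMeasure μ] (t C : ℝ) (hC : 1 ≤ C)
    (hreg : ∀ (x : X) (ρ : ℝ), 0 < ρ → ρ < Metric.diam (Set.univ : Set X) →
      ENNReal.ofReal (C⁻¹ * ρ ^ t) ≤ μ (closedBall x ρ) ∧
      μ (closedBall x ρ) ≤ ENNReal.ofReal (C * ρ ^ t))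
    (r : ℕ → ℝ) (hrpos : ∀ n, 0 < r n)
    (hrlim : Tendsto r atTop (nhds 0))
    (hsum : ¬ Summable fun n => r n ^ t)
    {Ω : Type*} [MeasurableSpace Ω] (P : Measure Ω) [IsProbabilityMeasure P]
    (x : ℕ → Ω → X) (hmeas : ∀ n, Measurable (x n))
    (hindep : iIndepFun (m := fun _ => ‹MeasurableSpace X›) x P)
    (hlaw : ∀ n, Measure.map (x n) P = μ) :
    ∀ᵐ ω ∂P, μ (⋂ k : ℕ, ⋃ n : ℕ, ⋃ _ : k ≤ n, closedBall (x n ω) (r n)) = 1 := by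
  have hdiv : ∀ y, ∑' n, μ (closedBall y (r n)) = ∞ := tsum_measure_closedBall_eq_top
    (zero_lt_one.trans_le hC) (fun y ρ h₀ h₁ => (hreg y ρ h₀ h₁).1) hrpos hrlim hsum
  have hhit : ∀ y, ∀ᵐ ω ∂P, y ∈ ⋂ k : ℕ, ⋃ n : ℕ, ⋃ _ : k ≤ n, closedBall (x n ω) (r n) := by
    intro y
    have hlaw_ball : ∀ n, P (x n ⁻¹' closedBall y (r n)) = μ (closedBall y (r n)) := fun n => by
      rw [← hlaw n, Measure.map_apply (hmeas n) measurableSet_closedBall]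
    filter_upwards [hindep.ae_frequently_mem_of_tsum_eq_top hmeas
      (B := fun n => closedBall y (r n)) (fun n => measurableSet_closedBall)
      (by simpa only [hlaw_ball] using hdiv y)] with ω hω
    simpa [frequently_atTop, dist_comm] using hω
  exact ae_measure_eq_one_of_forall_ae_mem
    (measurableSet_setOf_mem_limsup_closedBall hmeas r) hhit

/-- Let `(X, ρ, μ)` be a compact metric measure space with `μ` an Ahlfors `t`-regular Borel
probability measure, `(r n)` a decreasing sequence of positive reals tending to zero with
`∑ (r n) ^ t = ∞`, and `x n` i.i.d. random points with law `μ`.  Then almost surely the random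
covering set `E(x) = limsupₙ B(xₙ, rₙ)` has full `μ`-measure. -/
theorem covering_set_full_of_not_summable
    {X : Type*} [MetricSpace X] [CompactSpace X] [MeasurableSpace X] [BorelSpace X]
    (μ : Measure X) [IsProbabilityMeasure μ] (t C : ℝ) (ht : 0 < t) (hC : 1 ≤ C)
    (hreg : ∀ (x : X) (ρ : ℝ), 0 < ρ → ρ < Metric.diam (Set.univ : Set X) →
      ENNReal.ofReal (C⁻¹ * ρ ^ t) ≤ μ (closedBall x ρ) ∧
      μ (closedBall x ρ) ≤ ENNReal.ofReal (C * ρ ^ t))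
    (r : ℕ → ℝ) (hrpos : ∀ n, 0 < r n) (hrmono : Antitone r)
    (hrlim : Tendsto r atTop (nhds 0))
    (hsum : ¬ Summable fun n => r n ^ t)
    {Ω : Type*} [MeasurableSpace Ω] (P : Measure Ω) [IsProbabilityMeasure P]
    (x : ℕ → Ω → X) (hmeas : ∀ n, Measurable (x n))
    (hindep : iIndepFun (m := fun _ => ‹MeasurableSpace X›) x P)
    (hlaw : ∀ n, Measure.map (x n) P = μ) :
    ∀ᵐ ω ∂P, μ (⋂ k : ℕ, ⋃ n : ℕ, ⋃ _ : k ≤ n, closedBall (x n ω) (r n)) = 1 :=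
  covering_set_full_of_not_summable_general μ t C hC hreg r hrpos hrlim hsum P x hmeas hindep hlaw
end

section
/- Let T be the boundary ∂T of a rooted tree whose vertices at level n correspond to the pieces Q ∈ 𝒬_n of a nested partition of a compact Ahlfors t-regular metric space X satisfying B(x_{n,i}, 2^{−n}) ⊂ Q_{n,i} ⊂ B(x_{n,i}, C·2^{−n}), equipped with the metric κ(v,u) = 2^{−min{i : v_i ≠ u_i}} (and κ(v,v) = 0). Let Π : ∂T → X be the canonical projection sending a path (Q_0 ⊃ Q_1 ⊃ ...) to the unique point of ⋂_n closure(Q_n). Then for every set E ⊂ X, the Hausdorff dimension of E in X equals the Hausdorff dimension of Π^{−1}(E) in (∂T, κ). -/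
/-!
The projection is Lipschitz: two paths that first differ at level `n + 1` project into the
closure of a common level-`n` piece, of diameter at most `2C·2⁻ⁿ`. Being also onto, it gives
`dimH E ≤ dimH (proj ⁻¹' E)`.

Conversely, Ahlfors regularity bounds the number of level-`k` pieces whose closures meet a ball
of radius `2⁻ᵏ`, since their disjoint inner balls of radius `2⁻ᵏ` all lie in one ball of radius
`(C + 2)·2⁻ᵏ`. So the preimage of a set of diameter `r ∈ [2⁻ᵏ⁻¹, 2⁻ᵏ]` is covered by boundedly
many level-`k` cylinders, each of diameter at most `2⁻ᵏ⁻¹ ≤ r`, and a map with this covering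
property pulls `μH[d]`-null sets back to `μH[d]`-null sets.
-/

open MeasureTheory Metric Set
open scoped ENNReal

theorem ENNReal.max_rpow_le_add (d : ℝ) (a b : ℝ≥0∞) :
    max a b ^ d ≤ a ^ d + b ^ d := by
  rcases le_total a b with h | h
  · rw [max_eq_right h]; exact le_add_self
  · rw [max_eq_left h]; exact le_self_add

theorem ENNReal.ofReal_inv_two_pow (k : ℕ) : ENNReal.ofReal ((2 ^ k)⁻¹) = (1 / 2) ^ k := by
  rw [ENNReal.ofReal_inv_of_pos (by positivity), ENNReal.ofReal_pow zero_le_two,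
    ENNReal.ofReal_ofNat, one_div, ENNReal.inv_pow]

theorem ENNReal.exists_half_pow_succ_le_le {r : ℝ≥0∞} (hr₀ : 0 < r) (hr₁ : r ≤ 1) :
    ∃ k : ℕ, (1 / 2) ^ (k + 1) ≤ r ∧ r ≤ (1 / 2) ^ k := by
  have hex : ∃ k : ℕ, (1 / 2 : ℝ≥0∞) ^ (k + 1) ≤ r := by
    obtain ⟨k, hk⟩ := ENNReal.exists_inv_two_pow_lt hr₀.ne'
    exact ⟨k, (pow_le_pow_of_le_one zero_le (by norm_num) k.le_succ).trans (by simpa using hk.le)⟩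
  refine ⟨Nat.find hex, Nat.find_spec hex, ?_⟩
  rcases h : Nat.find hex with _ | k
  · simpa using hr₁
  · exact le_of_lt (not_le.1 (Nat.find_min hex (h ▸ k.lt_succ_self)))

theorem ENNReal.tsum_max_half_pow_rpow_le (a : ℕ → ℝ≥0∞) (j : ℕ) (d : ℝ) :
    ∑' n, max (a n) ((1 / 2) ^ (j + n)) ^ d ≤
      ∑' n, a n ^ d + ((1 / 2) ^ d) ^ j * (1 - (1 / 2) ^ d)⁻¹ := by
  have hpow : ∀ n, ((1 / 2 : ℝ≥0∞) ^ (j + n)) ^ d = ((1 / 2) ^ d) ^ j * ((1 / 2) ^ d) ^ n :=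
    fun n => by rw [← ENNReal.rpow_natCast_mul, mul_comm, ENNReal.rpow_mul_natCast, pow_add]
  calc ∑' n, max (a n) ((1 / 2) ^ (j + n)) ^ d
      ≤ ∑' n, (a n ^ d + ((1 / 2 : ℝ≥0∞) ^ (j + n)) ^ d) :=
        ENNReal.tsum_le_tsum fun n => ENNReal.max_rpow_le_add d _ _
    _ = ∑' n, a n ^ d + ((1 / 2) ^ d) ^ j * (1 - (1 / 2) ^ d)⁻¹ := by
        rw [ENNReal.tsum_add]
        simp only [hpow, ENNReal.tsum_mul_left, ENNReal.tsum_geometric]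

theorem exists_cover_tsum_ediam_rpow_lt_of_hausdorffMeasure_eq_zero {X : Type*}
    [EMetricSpace X] [MeasurableSpace X] [BorelSpace X] {d : ℝ} (hd : 0 < d)
    {E : Set X} (hE : μH[d] E = 0) {δ η : ℝ≥0∞} (hδ : 0 < δ) (hη : 0 < η) :
    ∃ T : ℕ → Set X, E ⊆ ⋃ n, T n ∧ (∀ n, ediam (T n) ≤ δ) ∧ ∑' n, ediam (T n) ^ d < η := by
  have hδE : ⨅ (T : ℕ → Set X) (_ : E ⊆ ⋃ n, T n) (_ : ∀ n, ediam (T n) ≤ δ),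
      ∑' n, ⨆ _ : (T n).Nonempty, ediam (T n) ^ d < η := by
    refine lt_of_le_of_lt ?_ hη
    rw [← hE, Measure.hausdorffMeasure_apply]
    exact le_iSup₂ (f := fun r (_ : 0 < r) => ⨅ (T : ℕ → Set X) (_ : E ⊆ ⋃ n, T n)
      (_ : ∀ n, ediam (T n) ≤ r), ∑' n, ⨆ _ : (T n).Nonempty, ediam (T n) ^ d) δ hδ
  simp only [iInf_lt_iff] at hδE
  obtain ⟨T, hcover, hdiam, hsum⟩ := hδE
  refine ⟨T, hcover, hdiam, lt_of_le_of_lt (ENNReal.tsum_le_tsum fun n => ?_) hsum⟩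
  rcases (T n).eq_empty_or_nonempty with h | h
  · simp [h, ENNReal.zero_rpow_of_pos hd]
  · rw [iSup_pos h]

theorem tsum_sigma_ediam_rpow_le {Y : Type*} [EMetricSpace Y] {M : ℕ}
    {s : ℕ → Finset (Set Y)} (hs : ∀ n, (s n).card ≤ M) {ρ : ℕ → ℝ≥0∞}
    (hρ : ∀ n, ∀ V ∈ s n, ediam V ≤ ρ n) {d : ℝ} (hd : 0 ≤ d) :
    ∑' p : Σ n, ↥(s n), ediam (p.2 : Set Y) ^ d ≤ M * ∑' n, ρ n ^ d := by
  rw [ENNReal.tsum_sigma', ← ENNReal.tsum_mul_left]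
  refine ENNReal.tsum_le_tsum fun n => ?_
  rw [Finset.tsum_subtype (s n) (fun V => ediam V ^ d)]
  calc ∑ V ∈ s n, ediam V ^ d ≤ (s n).card • ρ n ^ d :=
        Finset.sum_le_card_nsmul _ _ _ fun V hV => ENNReal.rpow_le_rpow (hρ n V hV) hd
    _ ≤ M * ρ n ^ d := by
        rw [nsmul_eq_mul]
        gcongr
        exact_mod_cast hs n

theorem hausdorffMeasure_preimage_eq_zero_of_forall_cover {X Y : Type*} [EMetricSpace X]
    [MeasurableSpace X] [BorelSpace X] [EMetricSpace Y] [MeasurableSpace Y] [BorelSpace Y]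
    {f : Y → X} {M : ℕ}
    (hf : ∀ r ∈ Ioc (0 : ℝ≥0∞) 1, ∀ U : Set X, ediam U ≤ r →
      ∃ s : Finset (Set Y), s.card ≤ M ∧ f ⁻¹' U ⊆ ⋃₀ ↑s ∧ ∀ V ∈ s, ediam V ≤ r)
    {d : ℝ} (hd : 0 < d) {E : Set X} (hE : μH[d] E = 0) : μH[d] (f ⁻¹' E) = 0 := by
  have hhalf : ∀ j : ℕ, (0 : ℝ≥0∞) < (1 / 2) ^ j := fun j => ENNReal.pow_pos (by norm_num) j
  choose T hTcover hTdiam hTsum using fun j : ℕ =>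
    exists_cover_tsum_ediam_rpow_lt_of_hausdorffMeasure_eq_zero hd hE (hhalf j) (hhalf j)
  -- `T j n` may be a point, so the scale at which its preimage is covered is padded by a
  -- geometric amount.
  set r : ℕ → ℕ → ℝ≥0∞ := fun j n => max (ediam (T j n)) ((1 / 2) ^ (j + n))
  have hr_le : ∀ j n, r j n ≤ (1 / 2) ^ j := fun j n =>
    max_le (hTdiam j n) (pow_le_pow_of_le_one zero_le (by norm_num) (Nat.le_add_right j n))
  have hr_mem : ∀ j n, r j n ∈ Ioc (0 : ℝ≥0∞) 1 := fun j n =>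
    ⟨lt_max_of_lt_right (hhalf _), (hr_le j n).trans (pow_le_one₀ zero_le (by norm_num))⟩
  choose s hscard hscover hsdiam using fun j n =>
    hf (r j n) (hr_mem j n) (T j n) (le_max_left _ _)
  set y : ℝ≥0∞ := (1 / 2) ^ d
  have hsum : ∀ j, ∑' p : Σ n, ↥(s j n), ediam (p.2 : Set Y) ^ d ≤
      M * ((1 / 2) ^ j + y ^ j * (1 - y)⁻¹) := fun j =>
    calc ∑' p : Σ n, ↥(s j n), ediam (p.2 : Set Y) ^ d ≤ M * ∑' n, r j n ^ d :=
          tsum_sigma_ediam_rpow_le (hscard j) (hsdiam j) hd.le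
      _ ≤ M * (∑' n, ediam (T j n) ^ d + y ^ j * (1 - y)⁻¹) := by
          gcongr
          exact ENNReal.tsum_max_half_pow_rpow_le _ j d
      _ ≤ M * ((1 / 2) ^ j + y ^ j * (1 - y)⁻¹) := by
          gcongr
          exact (hTsum j).le
  have hlim : Filter.Tendsto (fun j : ℕ => (M : ℝ≥0∞) * ((1 / 2) ^ j + y ^ j * (1 - y)⁻¹))
      Filter.atTop (nhds 0) := by
    have hy : y < 1 := ENNReal.rpow_lt_one (by norm_num) hd
    have hgeom : (1 - y)⁻¹ ≠ ∞ := ENNReal.inv_ne_top.mpr (tsub_pos_of_lt hy).ne'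
    simpa using ENNReal.Tendsto.const_mul
      ((ENNReal.tendsto_pow_atTop_nhds_zero_of_lt_one (r := 1 / 2) (by norm_num)).add
        (ENNReal.Tendsto.mul_const (ENNReal.tendsto_pow_atTop_nhds_zero_of_lt_one hy)
          (Or.inr hgeom)))
      (Or.inr (ENNReal.natCast_ne_top M))
  refine le_antisymm ?_ zero_le
  calc μH[d] (f ⁻¹' E)
      ≤ Filter.liminf (fun j => ∑' p : Σ n, ↥(s j n), ediam (p.2 : Set Y) ^ d) Filter.atTop := by
        refine Measure.hausdorffMeasure_le_liminf_tsum d _ (fun j : ℕ => (1 / 2 : ℝ≥0∞) ^ j)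
          (ENNReal.tendsto_pow_atTop_nhds_zero_of_lt_one (by norm_num))
          (fun j (p : Σ n, ↥(s j n)) => (p.2 : Set Y)) (Filter.Eventually.of_forall ?_)
          (Filter.Eventually.of_forall ?_)
        · exact fun j p => (hsdiam j p.1 _ p.2.2).trans (hr_le j p.1)
        · intro j v hv
          obtain ⟨n, hn⟩ := mem_iUnion.mp (hTcover j hv)
          obtain ⟨V, hV, hvV⟩ := hscover j n hn
          exact mem_iUnion.mpr ⟨⟨n, V, hV⟩, hvV⟩
    _ ≤ Filter.liminf (fun j : ℕ => (M : ℝ≥0∞) * ((1 / 2) ^ j + y ^ j * (1 - y)⁻¹))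
          Filter.atTop := Filter.liminf_le_liminf (Filter.Eventually.of_forall hsum)
    _ = 0 := hlim.liminf_eq

theorem dimH_preimage_le_of_forall_cover {X Y : Type*} [EMetricSpace X] [EMetricSpace Y]
    {f : Y → X} {M : ℕ}
    (hf : ∀ r ∈ Ioc (0 : ℝ≥0∞) 1, ∀ U : Set X, ediam U ≤ r →
      ∃ s : Finset (Set Y), s.card ≤ M ∧ f ⁻¹' U ⊆ ⋃₀ ↑s ∧ ∀ V ∈ s, ediam V ≤ r)
    (E : Set X) : dimH (f ⁻¹' E) ≤ dimH E := by
  borelize X Y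
  refine dimH_le fun d hd => ?_
  by_contra! hlt
  have hd₀ : (0 : ℝ) < d := by exact_mod_cast zero_le.trans_lt hlt
  rw [hausdorffMeasure_preimage_eq_zero_of_forall_cover hf hd₀
    (hausdorffMeasure_of_dimH_lt hlt)] at hd
  exact ENNReal.zero_ne_top hd

theorem Finset.card_le_of_pairwiseDisjoint_of_measure_le_mul {ι α : Type*} [MeasurableSpace α]
    (μ : Measure α) {s : Finset ι} {A : Set α} {B : ι → Set α} (hBA : ∀ i ∈ s, B i ⊆ A)
    (hdisj : (s : Set ι).PairwiseDisjoint B) (hB : ∀ i ∈ s, MeasurableSet (B i)) {K : ℝ≥0∞}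
    (hK : ∀ i ∈ s, μ A ≤ K * μ (B i)) (hA₀ : μ A ≠ 0) (hA : μ A ≠ ∞) :
    (s.card : ℝ≥0∞) ≤ K := by
  refine (ENNReal.mul_le_mul_iff_left hA₀ hA).mp ?_
  calc (s.card : ℝ≥0∞) * μ A = ∑ i ∈ s, μ A := by rw [Finset.sum_const, nsmul_eq_mul]
    _ ≤ ∑ i ∈ s, K * μ (B i) := Finset.sum_le_sum hK
    _ = K * μ (⋃ i ∈ s, B i) := by rw [measure_biUnion_finset hdisj hB, Finset.mul_sum]
    _ ≤ K * μ A := by gcongr; exact iUnion₂_subset hBA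

theorem Metric.closedBall_eq_univ_of_diam_le {X : Type*} [PseudoMetricSpace X] [BoundedSpace X]
    (x : X) {ρ : ℝ} (h : diam (univ : Set X) ≤ ρ) : closedBall x ρ = univ :=
  eq_univ_of_forall fun y =>
    mem_closedBall.2
      ((dist_le_diam_of_mem (Bornology.IsBounded.all _) (mem_univ y) (mem_univ x)).trans h)

def IsAhlforsRegular {X : Type*} [MetricSpace X] [MeasurableSpace X] (μ : Measure X)
    (t C : ℝ) : Prop :=
  ∀ (x : X) (ρ : ℝ), 0 < ρ → ρ < diam (univ : Set X) →
    ENNReal.ofReal (C⁻¹ * ρ ^ t) ≤ μ (closedBall x ρ) ∧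
      μ (closedBall x ρ) ≤ ENNReal.ofReal (C * ρ ^ t)

namespace IsAhlforsRegular

variable {X : Type*} [MetricSpace X] [MeasurableSpace X]
  {μ : Measure X} [IsProbabilityMeasure μ] {t C : ℝ}

theorem measure_closedBall_ne_zero [CompactSpace X] (hμ : IsAhlforsRegular μ t C) (hC : 0 < C)
    (x : X) {ρ : ℝ} (hρ : 0 < ρ) : μ (closedBall x ρ) ≠ 0 := by
  by_cases hρD : ρ < diam (univ : Set X)
  · refine (lt_of_lt_of_le ?_ (hμ x ρ hρ hρD).1).ne'
    exact ENNReal.ofReal_pos.2 (by positivity)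
  · rw [closedBall_eq_univ_of_diam_le x (not_lt.1 hρD)]
    simp

theorem measure_closedBall_le (hμ : IsAhlforsRegular μ t C) (ht : 0 ≤ t)
    (hD : 0 < diam (univ : Set X)) (x : X) {ρ : ℝ} (hρ : 0 < ρ) :
    μ (closedBall x ρ) ≤ ENNReal.ofReal (max C (diam (univ : Set X) ^ t)⁻¹ * ρ ^ t) := by
  by_cases hρD : ρ < diam (univ : Set X)
  · refine (hμ x ρ hρ hρD).2.trans (ENNReal.ofReal_le_ofReal ?_)
    gcongr
    exact le_max_left _ _
  · refine prob_le_one.trans (ENNReal.one_le_ofReal.2 ?_)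
    have hDt : 0 < diam (univ : Set X) ^ t := Real.rpow_pos_of_pos hD t
    calc (1 : ℝ) = (diam (univ : Set X) ^ t)⁻¹ * diam (univ : Set X) ^ t := by field_simp
      _ ≤ max C (diam (univ : Set X) ^ t)⁻¹ * ρ ^ t := by
        gcongr
        · exact le_max_right _ _
        · exact not_lt.1 hρD

theorem exists_measure_closedBall_le_mul [CompactSpace X] (hμ : IsAhlforsRegular μ t C)
    (ht : 0 ≤ t) (hC : 0 < C) {L : ℝ} (hL : 0 < L) :
    ∃ K : ℕ, ∀ (x y : X) (r : ℝ), 0 < r → μ (closedBall y (L * r)) ≤ K * μ (closedBall x r) := by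
  set D := diam (univ : Set X)
  obtain ⟨K, hK⟩ := exists_nat_ge (max 1 (C * L ^ t * max C (D ^ t)⁻¹))
  refine ⟨K, fun x y r hr => ?_⟩
  by_cases hrD : r < D
  · have hD : 0 < D := hr.trans hrD
    calc μ (closedBall y (L * r)) ≤ ENNReal.ofReal (max C (D ^ t)⁻¹ * (L * r) ^ t) :=
          hμ.measure_closedBall_le ht hD y (by positivity)
      _ = ENNReal.ofReal (C * L ^ t * max C (D ^ t)⁻¹) * ENNReal.ofReal (C⁻¹ * r ^ t) := by
          rw [← ENNReal.ofReal_mul (by positivity), Real.mul_rpow hL.le hr.le]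
          congr 1
          field_simp
      _ ≤ K * μ (closedBall x r) := by
          gcongr
          · exact ENNReal.ofReal_natCast K ▸ ENNReal.ofReal_le_ofReal ((le_max_right _ _).trans hK)
          · exact (hμ x r hr hrD).1
  · rw [closedBall_eq_univ_of_diam_le x (not_lt.1 hrD), measure_univ, mul_one]
    exact prob_le_one.trans (by exact_mod_cast (le_max_left _ _).trans hK)

theorem exists_card_le_of_pairwiseDisjoint [CompactSpace X] [OpensMeasurableSpace X]
    (hμ : IsAhlforsRegular μ t C) (ht : 0 ≤ t) (hC : 0 < C) :
    ∃ M : ℕ, ∀ r : ℝ, 0 < r → ∀ (a : X) (S : Finset (Set X)), (S : Set (Set X)).Pairwise Disjoint →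
      (∀ Q ∈ S, ∃ x, closedBall x r ⊆ Q ∧ Q ⊆ closedBall x (C * r)) →
      (∀ Q ∈ S, (closure Q ∩ closedBall a r).Nonempty) → S.card ≤ M := by
  obtain ⟨M, hM⟩ := hμ.exists_measure_closedBall_le_mul ht hC (L := C + 2) (by linarith)
  refine ⟨M, fun r hr a S hdisj hsize hnear => ?_⟩
  have : Nonempty X := ⟨a⟩
  choose! c hcQ hQc using hsize
  have hsub : ∀ Q ∈ S, closedBall (c Q) r ⊆ closedBall a ((C + 2) * r) := by
    intro Q hQ z hz
    obtain ⟨y, hyQ, hya⟩ := hnear Q hQ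
    have hyc := mem_closedBall.1 (closure_minimal (hQc Q hQ) isClosed_closedBall hyQ)
    rw [mem_closedBall] at hz hya ⊢
    calc dist z a ≤ dist z (c Q) + dist y (c Q) + dist y a := by
          have := dist_triangle4 z (c Q) y a
          rwa [dist_comm (c Q) y] at this
      _ ≤ (C + 2) * r := by linarith
  exact_mod_cast Finset.card_le_of_pairwiseDisjoint_of_measure_le_mul μ hsub
    (fun Q hQ R hR hQR => (hdisj hQ hR hQR).mono (hcQ Q hQ) (hcQ R hR))
    (fun _ _ => measurableSet_closedBall) (fun Q _ => hM (c Q) a r hr)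
    (hμ.measure_closedBall_ne_zero hC a (by positivity)) (measure_ne_top _ _)

end IsAhlforsRegular

theorem dist_le_two_mul_of_mem_closure {X : Type*} [PseudoMetricSpace X] {Q : Set X} {x : X}
    {ρ : ℝ} (hQ : Q ⊆ closedBall x ρ) {y z : X} (hy : y ∈ closure Q) (hz : z ∈ closure Q) :
    dist y z ≤ 2 * ρ := by
  have hy' := mem_closedBall.1 (closure_minimal hQ isClosed_closedBall hy)
  have hz' := mem_closedBall.1 (closure_minimal hQ isClosed_closedBall hz)
  linarith [dist_triangle_right y z x]

namespace TreeBoundary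

variable {X B : Type*} {𝒬 : ℕ → Set (Set X)} {path : B → ℕ → Set X}

theorem path_eq_of_path_eq_of_le (hdisj : ∀ n, (𝒬 n).Pairwise Disjoint)
    (hne : ∀ n, ∀ Q ∈ 𝒬 n, Q.Nonempty) (hpathmem : ∀ v n, path v n ∈ 𝒬 n)
    (hpathnested : ∀ v n, path v (n + 1) ⊆ path v n) {v u : B} {i k : ℕ} (hik : i ≤ k)
    (h : path v k = path u k) : path v i = path u i := by
  obtain ⟨x, hx⟩ := hne k _ (hpathmem v k)
  by_contra hvu
  have hanti : ∀ w, Antitone (path w) := fun w => antitone_nat_of_succ_le (hpathnested w)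
  exact disjoint_left.1 (hdisj i (hpathmem v i) (hpathmem u i) hvu) (hanti v hik hx)
    (hanti u hik (h ▸ hx))

theorem edist_le_of_path_eq [EMetricSpace B] (hdisj : ∀ n, (𝒬 n).Pairwise Disjoint)
    (hne : ∀ n, ∀ Q ∈ 𝒬 n, Q.Nonempty) (hpathmem : ∀ v n, path v n ∈ 𝒬 n)
    (hpathnested : ∀ v n, path v (n + 1) ⊆ path v n) (hinj : Function.Injective path)
    (hdist : ∀ v u : B, v ≠ u → edist v u = (1 / 2 : ℝ≥0∞) ^ sInf {i : ℕ | path v i ≠ path u i})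
    {v u : B} {k : ℕ} (h : path v k = path u k) : edist v u ≤ (1 / 2) ^ (k + 1) := by
  rcases eq_or_ne v u with rfl | hvu
  · simp
  rw [hdist v u hvu]
  refine pow_le_pow_of_le_one zero_le (by norm_num)
    (le_csInf (Function.ne_iff.1 (hinj.ne hvu)) fun i hi => ?_)
  by_contra hik
  exact hi (path_eq_of_path_eq_of_le hdisj hne hpathmem hpathnested (by omega) h)

theorem lipschitzWith_proj [MetricSpace X] [EMetricSpace B] {C : ℝ} (hC : 0 ≤ C)
    (hsmall : ∀ n, ∀ Q ∈ 𝒬 n, ∃ x, Q ⊆ closedBall x (C * ((2 : ℝ) ^ n)⁻¹))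
    (hpathmem : ∀ v n, path v n ∈ 𝒬 n) (hpath₀ : ∀ v u, path v 0 = path u 0)
    (hinj : Function.Injective path)
    (hdist : ∀ v u : B, v ≠ u → edist v u = (1 / 2 : ℝ≥0∞) ^ sInf {i : ℕ | path v i ≠ path u i})
    {proj : B → X} (hproj : ∀ v n, proj v ∈ closure (path v n)) :
    LipschitzWith (4 * C).toNNReal proj := by
  intro v u
  rcases eq_or_ne v u with rfl | hvu
  · simp
  have hne := Function.ne_iff.1 (hinj.ne hvu)
  obtain ⟨m, hm⟩ : ∃ m, sInf {i | path v i ≠ path u i} = m + 1 :=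
    Nat.exists_eq_succ_of_ne_zero fun h0 => (h0 ▸ Nat.sInf_mem hne) (hpath₀ v u)
  have hvum : path v m = path u m := by
    by_contra h
    have := Nat.sInf_le (show m ∈ {i | path v i ≠ path u i} from h)
    omega
  obtain ⟨x, hx⟩ := hsmall m _ (hpathmem v m)
  have hd := dist_le_two_mul_of_mem_closure hx (hproj v m) (hvum ▸ hproj u m)
  rw [hdist v u hvu, hm, edist_dist]
  calc ENNReal.ofReal (dist (proj v) (proj u))
        ≤ ENNReal.ofReal (4 * C * ((2 : ℝ) ^ (m + 1))⁻¹) := by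
        refine ENNReal.ofReal_le_ofReal (hd.trans_eq ?_)
        rw [pow_succ, mul_inv]
        ring
    _ = (4 * C).toNNReal * (1 / 2) ^ (m + 1) := by
        rw [ENNReal.ofReal_mul (by positivity), ENNReal.ofReal_inv_two_pow]
        rfl

theorem surjective_proj [MetricSpace X] {C : ℝ}
    (hsmall : ∀ n, ∀ Q ∈ 𝒬 n, ∃ x, Q ⊆ closedBall x (C * ((2 : ℝ) ^ n)⁻¹))
    (hcover : ∀ n, ⋃₀ 𝒬 n = univ)
    (hnested : ∀ m n : ℕ, n ≤ m → ∀ Q ∈ 𝒬 m, ∀ R ∈ 𝒬 n, Q ⊆ R ∨ Disjoint Q R)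
    (hsurj : ∀ Q : ℕ → Set X, (∀ n, Q n ∈ 𝒬 n) → (∀ n, Q (n + 1) ⊆ Q n) → ∃ v, path v = Q)
    {proj : B → X} (hproj : ∀ v n, proj v ∈ closure (path v n)) :
    Function.Surjective proj := by
  intro x
  have hx : ∀ n, ∃ Q ∈ 𝒬 n, x ∈ Q := fun n => mem_sUnion.1 ((hcover n).symm ▸ mem_univ x)
  choose Q hQ hxQ using hx
  obtain ⟨v, rfl⟩ := hsurj Q hQ fun n =>
    (hnested (n + 1) n n.le_succ _ (hQ _) _ (hQ n)).resolve_right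
      (not_disjoint_iff.2 ⟨x, hxQ _, hxQ n⟩)
  refine ⟨v, dist_le_zero.1 (ge_of_tendsto' (x := Filter.atTop)
    (f := fun n : ℕ => 2 * (C * ((2 : ℝ) ^ n)⁻¹)) ?_ fun n => ?_)⟩
  · simpa using ((tendsto_inv_atTop_zero.comp
      (tendsto_pow_atTop_atTop_of_one_lt one_lt_two)).const_mul C).const_mul 2
  · obtain ⟨y, hy⟩ := hsmall n _ (hQ n)
    exact dist_le_two_mul_of_mem_closure hy (hproj v n) (subset_closure (hxQ n))

theorem exists_cover_preimage_proj [MetricSpace X] [EMetricSpace B] (hfin : ∀ n, (𝒬 n).Finite)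
    (hdisj : ∀ n, (𝒬 n).Pairwise Disjoint)
    (hne : ∀ n, ∀ Q ∈ 𝒬 n, Q.Nonempty) (hpathmem : ∀ v n, path v n ∈ 𝒬 n)
    (hpathnested : ∀ v n, path v (n + 1) ⊆ path v n) (hinj : Function.Injective path)
    (hdist : ∀ v u : B, v ≠ u → edist v u = (1 / 2 : ℝ≥0∞) ^ sInf {i : ℕ | path v i ≠ path u i})
    {proj : B → X} (hproj : ∀ v n, proj v ∈ closure (path v n)) {M : ℕ}
    (hmult : ∀ (k : ℕ) (a : X) (S : Finset (Set X)), ↑S ⊆ 𝒬 k →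
      (∀ Q ∈ S, (closure Q ∩ closedBall a ((2 : ℝ) ^ k)⁻¹).Nonempty) → S.card ≤ M) :
    ∀ r ∈ Ioc (0 : ℝ≥0∞) 1, ∀ U : Set X, ediam U ≤ r →
      ∃ s : Finset (Set B), s.card ≤ M ∧ proj ⁻¹' U ⊆ ⋃₀ ↑s ∧ ∀ V ∈ s, ediam V ≤ r := by
  classical
  rintro r ⟨hr₀, hr₁⟩ U hU
  obtain ⟨k, hkr, hrk⟩ := ENNReal.exists_half_pow_succ_le_le hr₀ hr₁
  rcases U.eq_empty_or_nonempty with rfl | ⟨a, ha⟩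
  · exact ⟨∅, by simp, by simp, by simp⟩
  set S := (hfin k).toFinset.filter fun Q => (closure Q ∩ closedBall a ((2 : ℝ) ^ k)⁻¹).Nonempty
  refine ⟨S.image fun Q => {v | path v k = Q},
    Finset.card_image_le.trans (hmult k a S (fun Q hQ => ?_) fun Q hQ => ?_), ?_, ?_⟩
  · exact (hfin k).mem_toFinset.1 (Finset.mem_filter.1 hQ).1
  · exact (Finset.mem_filter.1 hQ).2
  · intro v hv
    have hvS : path v k ∈ S := by
      refine Finset.mem_filter.2 ⟨(hfin k).mem_toFinset.2 (hpathmem v k), proj v, hproj v k, ?_⟩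
      rw [mem_closedBall, ← ENNReal.ofReal_le_ofReal_iff (by positivity), ← edist_dist,
        ENNReal.ofReal_inv_two_pow]
      exact (edist_le_ediam_of_mem (s := U) hv ha).trans (hU.trans hrk)
    exact mem_sUnion.2 ⟨_, Finset.mem_coe.2 (Finset.mem_image_of_mem _ hvS), rfl⟩
  · simp only [Finset.mem_image]
    rintro _ ⟨Q, -, rfl⟩
    refine (ediam_le fun v hv u hu => ?_).trans hkr
    exact edist_le_of_path_eq hdisj hne hpathmem hpathnested hinj hdist (hv.trans hu.symm)

end TreeBoundary

theorem dimH_eq_dimH_preimage_treeBoundary_general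
    {X : Type*} [MetricSpace X] [CompactSpace X] [MeasurableSpace X] [BorelSpace X]
    (μ : Measure X) [IsProbabilityMeasure μ] (t C : ℝ) (ht : 0 < t) (hC : 1 ≤ C)
    (hreg : ∀ (x : X) (ρ : ℝ), 0 < ρ → ρ < Metric.diam (Set.univ : Set X) →
      ENNReal.ofReal (C⁻¹ * ρ ^ t) ≤ μ (closedBall x ρ) ∧
      μ (closedBall x ρ) ≤ ENNReal.ofReal (C * ρ ^ t))
    (𝒬 : ℕ → Set (Set X))
    (hfin : ∀ n, (𝒬 n).Finite)
    (hdisj : ∀ n, (𝒬 n).Pairwise Disjoint)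
    (hcover : ∀ n, ⋃₀ 𝒬 n = Set.univ)
    (h0 : 𝒬 0 = {Set.univ})
    (hball : ∀ n, ∀ Q ∈ 𝒬 n, ∃ x : X,
      Metric.closedBall x (((2:ℝ) ^ n)⁻¹) ⊆ Q ∧ Q ⊆ Metric.closedBall x (C * ((2:ℝ) ^ n)⁻¹))
    (hnested : ∀ m n : ℕ, n ≤ m → ∀ Q ∈ 𝒬 m, ∀ R ∈ 𝒬 n, Q ⊆ R ∨ Disjoint Q R)
    (B : Type*) [EMetricSpace B]
    (path : B → ℕ → Set X)
    (hpathmem : ∀ v n, path v n ∈ 𝒬 n)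
    (hpathnested : ∀ (v : B) (n : ℕ), path v (n + 1) ⊆ path v n)
    (hinj : Function.Injective path)
    (hsurj : ∀ Q : ℕ → Set X, (∀ n, Q n ∈ 𝒬 n) → (∀ n, Q (n + 1) ⊆ Q n) → ∃ v, path v = Q)
    (hdist : ∀ v u : B, v ≠ u →
      edist v u = (1 / 2 : ℝ≥0∞) ^ sInf {i : ℕ | path v i ≠ path u i})
    (proj : B → X) (hproj : ∀ (v : B) (n : ℕ), proj v ∈ closure (path v n))
    (E : Set X) :
    dimH E = dimH (proj ⁻¹' E) := by
  have hC₀ : 0 < C := zero_lt_one.trans_le hC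
  have hne : ∀ n, ∀ Q ∈ 𝒬 n, Q.Nonempty := fun n Q hQ =>
    let ⟨x, hx, _⟩ := hball n Q hQ
    ⟨x, hx (mem_closedBall_self (by positivity))⟩
  have hsmall : ∀ n, ∀ Q ∈ 𝒬 n, ∃ x, Q ⊆ closedBall x (C * ((2 : ℝ) ^ n)⁻¹) :=
    fun n Q hQ => (hball n Q hQ).imp fun _ => And.right
  have hpath₀ : ∀ v u, path v 0 = path u 0 := fun v u => by
    have hv := hpathmem v 0
    have hu := hpathmem u 0
    rw [h0] at hv hu
    exact hv.trans hu.symm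
  obtain ⟨M, hM⟩ := IsAhlforsRegular.exists_card_le_of_pairwiseDisjoint hreg ht.le hC₀
  have hmult : ∀ (k : ℕ) (a : X) (S : Finset (Set X)), ↑S ⊆ 𝒬 k →
      (∀ Q ∈ S, (closure Q ∩ closedBall a ((2 : ℝ) ^ k)⁻¹).Nonempty) → S.card ≤ M :=
    fun k a S hS hnear =>
      hM _ (by positivity) a S ((hdisj k).mono hS) (fun Q hQ => hball k Q (hS hQ)) hnear
  refine le_antisymm ?_ ?_
  · have himage := (TreeBoundary.lipschitzWith_proj hC₀.le hsmall hpathmem hpath₀ hinj hdist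
      hproj).dimH_image_le (proj ⁻¹' E)
    rwa [image_preimage_eq E (TreeBoundary.surjective_proj hsmall hcover hnested hsurj hproj)]
      at himage
  · exact dimH_preimage_le_of_forall_cover (TreeBoundary.exists_cover_preimage_proj hfin hdisj
      hne hpathmem hpathnested hinj hdist hproj hmult) E

/-- Let `X` be a compact metric space carrying an Ahlfors `t`-regular Borel probability
measure `μ`, and let `(𝒬 n)` be nested finite Borel partitions of `X` with `𝒬 0 = {X}`,
each piece `Q ∈ 𝒬 n` containing a closed ball of radius `2⁻ⁿ` and contained in the
concentric closed ball of radius `C·2⁻ⁿ`.  Let `B` be (the boundary `∂T` of) the associated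
tree: an extended metric space whose points `v` correspond bijectively to nested chains
`path v : ℕ → Set X` of pieces, with `edist v u = 2^{-min{i : path v i ≠ path u i}}` for
`v ≠ u`.  Let `proj : B → X` be the canonical projection, `proj v ∈ ⋂ n closure (path v n)`.
Then for every `E ⊆ X`, the Hausdorff dimension of `E` in `X` equals the Hausdorff
dimension of `proj ⁻¹' E` in `(∂T, κ)`. -/
theorem dimH_eq_dimH_preimage_treeBoundary
    {X : Type*} [MetricSpace X] [CompactSpace X] [MeasurableSpace X] [BorelSpace X]
    (μ : Measure X) [IsProbabilityMeasure μ] (t C : ℝ) (ht : 0 < t) (hC : 1 ≤ C)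
    (hreg : ∀ (x : X) (ρ : ℝ), 0 < ρ → ρ < Metric.diam (Set.univ : Set X) →
      ENNReal.ofReal (C⁻¹ * ρ ^ t) ≤ μ (closedBall x ρ) ∧
      μ (closedBall x ρ) ≤ ENNReal.ofReal (C * ρ ^ t))
    (𝒬 : ℕ → Set (Set X))
    (hfin : ∀ n, (𝒬 n).Finite)
    (hmeas : ∀ n, ∀ Q ∈ 𝒬 n, MeasurableSet Q)
    (hdisj : ∀ n, (𝒬 n).Pairwise Disjoint)
    (hcover : ∀ n, ⋃₀ 𝒬 n = Set.univ)
    (h0 : 𝒬 0 = {Set.univ})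
    (hball : ∀ n, ∀ Q ∈ 𝒬 n, ∃ x : X,
      Metric.closedBall x (((2:ℝ) ^ n)⁻¹) ⊆ Q ∧ Q ⊆ Metric.closedBall x (C * ((2:ℝ) ^ n)⁻¹))
    (hnested : ∀ m n : ℕ, n ≤ m → ∀ Q ∈ 𝒬 m, ∀ R ∈ 𝒬 n, Q ⊆ R ∨ Disjoint Q R)
    (B : Type*) [EMetricSpace B]
    (path : B → ℕ → Set X)
    (hpathmem : ∀ v n, path v n ∈ 𝒬 n)
    (hpathnested : ∀ (v : B) (n : ℕ), path v (n + 1) ⊆ path v n)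
    (hinj : Function.Injective path)
    (hsurj : ∀ Q : ℕ → Set X, (∀ n, Q n ∈ 𝒬 n) → (∀ n, Q (n + 1) ⊆ Q n) → ∃ v, path v = Q)
    (hdist : ∀ v u : B, v ≠ u →
      edist v u = (1 / 2 : ℝ≥0∞) ^ sInf {i : ℕ | path v i ≠ path u i})
    (proj : B → X) (hproj : ∀ (v : B) (n : ℕ), proj v ∈ closure (path v n))
    (E : Set X) :
    dimH E = dimH (proj ⁻¹' E) :=
  dimH_eq_dimH_preimage_treeBoundary_general μ t C ht hC hreg 𝒬 hfin hdisj hcover h0 hball hnested B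
    path hpathmem hpathnested hinj hsurj hdist proj hproj E
end
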